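/- In the instantaneous cluster-wise pseudo-SE setup, for every precoder tuple q̄, every u ∈ ℂ^S, and every ρ ∈ (0,∞)^S, the WMMSE objective satisfies J(ρ, u, q̄) ≥ Σ_{k∈S} w_k · (1 − log(1 + SLINR_k(q̄))). In particular, on any set F of precoder tuples, the infimum of J over F × ℂ^S × (0,∞)^S is bounded below by Σ_{k∈S} w_k − sup_{q̄∈F} Σ_{k∈S} w_k · log(1 + SLINR_k(q̄)). -/

import Mathlib

/-!
For each user, minimizing the MSE over the receive coefficient `u` gives `D_k / A_k`
(complete the square in `u`), and `D_k / A_k = 1 / (1 + SLINR_k)`. For a fixed MSE value `e > 0`,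
`ρ e - log ρ` is minimized at `ρ = 1 / e` with value `1 + log e`, which is the inequality
`log x ≤ x - 1` at `x = ρ e`. Summing with the weights gives the pointwise bound; the bound on
the infimum follows by bounding the rate term of each `q̄ ∈ F` by the supremum.
-/

open scoped BigOperators

noncomputable section

variable {S S' : Type*} [Fintype S] [Fintype S'] {n : ℕ}

/-- Effective desired-signal coefficient `b_k(q̄) = ⟪g_k, q̄_k⟫`. -/
def bCoef (g : S → EuclideanSpace ℂ (Fin n)) (q : S → EuclideanSpace ℂ (Fin n)) (k : S) : ℂ :=
  inner ℂ (g k) (q k)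

/-- Total received power
`A_k(q̄) = ∑_{j∈S} |⟪g_k, q̄_j⟫|² + ∑_{j∈S'} |⟪g_j, q̄_k⟫|² + σ²`. -/
def Apow (g : S → EuclideanSpace ℂ (Fin n)) (h : S' → EuclideanSpace ℂ (Fin n)) (σ : ℝ)
    (q : S → EuclideanSpace ℂ (Fin n)) (k : S) : ℝ :=
  (∑ j, ‖(inner ℂ (g k) (q j) : ℂ)‖ ^ 2) + (∑ j, ‖(inner ℂ (h j) (q k) : ℂ)‖ ^ 2) + σ ^ 2

/-- Interference-plus-leakage-plus-noise power `D_k(q̄) = A_k(q̄) - |b_k(q̄)|²`. -/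
def Dpow (g : S → EuclideanSpace ℂ (Fin n)) (h : S' → EuclideanSpace ℂ (Fin n)) (σ : ℝ)
    (q : S → EuclideanSpace ℂ (Fin n)) (k : S) : ℝ :=
  Apow g h σ q k - ‖bCoef g q k‖ ^ 2

/-- The hybrid SLINR `SLINR_k(q̄) = |b_k(q̄)|² / D_k(q̄)`. -/
def slinr (g : S → EuclideanSpace ℂ (Fin n)) (h : S' → EuclideanSpace ℂ (Fin n)) (σ : ℝ)
    (q : S → EuclideanSpace ℂ (Fin n)) (k : S) : ℝ :=
  ‖bCoef g q k‖ ^ 2 / Dpow g h σ q k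

/-- Per-user MSE `e_k(u, q̄) = |u|² A_k(q̄) - 2 Re(conj u · b_k(q̄)) + 1`. -/
def mse (g : S → EuclideanSpace ℂ (Fin n)) (h : S' → EuclideanSpace ℂ (Fin n)) (σ : ℝ)
    (q : S → EuclideanSpace ℂ (Fin n)) (k : S) (u : ℂ) : ℝ :=
  ‖u‖ ^ 2 * Apow g h σ q k - 2 * (starRingEnd ℂ u * bCoef g q k).re + 1

/-- WMMSE objective `J(ρ, u, q̄) = ∑_{k∈S} w_k (ρ_k e_k(u_k, q̄) - log ρ_k)`. -/
def Jobj (g : S → EuclideanSpace ℂ (Fin n)) (h : S' → EuclideanSpace ℂ (Fin n)) (σ : ℝ)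
    (w : S → ℝ) (ρ : S → ℝ) (u : S → ℂ) (q : S → EuclideanSpace ℂ (Fin n)) : ℝ :=
  ∑ k, w k * (ρ k * mse g h σ q k (u k) - Real.log (ρ k))

open Real

theorem one_add_log_le_mul_sub_log {m e ρ : ℝ} (hm : 0 < m) (hme : m ≤ e) (hρ : 0 < ρ) :
    1 + log m ≤ ρ * e - log ρ := by
  have hlog : log (ρ * m) ≤ ρ * m - 1 := log_le_sub_one_of_pos (mul_pos hρ hm)
  rw [log_mul hρ.ne' hm.ne'] at hlog
  linarith [mul_le_mul_of_nonneg_left hme hρ.le]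

theorem sub_norm_sq_div_le_quadratic {A : ℝ} (hA : 0 < A) (b u : ℂ) :
    (A - ‖b‖ ^ 2) / A ≤ ‖u‖ ^ 2 * A - 2 * (starRingEnd ℂ u * b).re + 1 := by
  have hre : (starRingEnd ℂ u * b).re ≤ ‖u‖ * ‖b‖ := by
    simpa only [norm_mul, RCLike.norm_conj] using Complex.re_le_norm (starRingEnd ℂ u * b)
  rw [div_le_iff₀ hA]
  nlinarith [sq_nonneg (‖u‖ * A - ‖b‖), mul_le_mul_of_nonneg_right hre hA.le]

theorem EReal.coe_sub_sSup_image_le_sInf {ι : Type*} (F : Set ι) (c : ℝ) (f : ι → ℝ)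
    (T : Set EReal) (hT : ∀ x ∈ T, ∃ i ∈ F, ((c - f i : ℝ) : EReal) ≤ x) :
    (c : EReal) - sSup ((fun i => (f i : EReal)) '' F) ≤ sInf T := by
  refine le_sInf fun x hx => ?_
  obtain ⟨i, hi, hix⟩ := hT x hx
  calc (c : EReal) - sSup ((fun i => (f i : EReal)) '' F)
      ≤ (c : EReal) - (f i : EReal) := EReal.sub_le_sub le_rfl (le_sSup ⟨i, hi, rfl⟩)
    _ ≤ x := by rwa [← EReal.coe_sub]

section PseudoSE

variable (g : S → EuclideanSpace ℂ (Fin n)) (h : S' → EuclideanSpace ℂ (Fin n)) (σ : ℝ)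
  (q : S → EuclideanSpace ℂ (Fin n)) (k : S)

theorem norm_bCoef_sq_add_sq_le_Apow : ‖bCoef g q k‖ ^ 2 + σ ^ 2 ≤ Apow g h σ q k := by
  have hdesired : ‖bCoef g q k‖ ^ 2 ≤ ∑ j, ‖(inner ℂ (g k) (q j) : ℂ)‖ ^ 2 :=
    Finset.single_le_sum (f := fun j => ‖(inner ℂ (g k) (q j) : ℂ)‖ ^ 2)
      (fun j _ => sq_nonneg _) (Finset.mem_univ k)
  have hleak : 0 ≤ ∑ j, ‖(inner ℂ (h j) (q k) : ℂ)‖ ^ 2 :=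
    Finset.sum_nonneg fun j _ => sq_nonneg _
  unfold Apow
  linarith

variable {σ}

theorem Dpow_pos (hσ : 0 < σ) : 0 < Dpow g h σ q k := by
  have := norm_bCoef_sq_add_sq_le_Apow g h σ q k
  unfold Dpow
  linarith [pow_pos hσ 2]

theorem one_add_slinr_eq_Apow_div_Dpow (hσ : 0 < σ) :
    1 + slinr g h σ q k = Apow g h σ q k / Dpow g h σ q k := by
  have hD := (Dpow_pos g h q k hσ).ne'
  unfold slinr
  field_simp
  unfold Dpow
  ring

theorem one_sub_log_one_add_slinr_le (hσ : 0 < σ) (u : ℂ) {ρ : ℝ} (hρ : 0 < ρ) :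
    1 - log (1 + slinr g h σ q k) ≤ ρ * mse g h σ q k u - log ρ := by
  have hD := Dpow_pos g h q k hσ
  have hA : 0 < Apow g h σ q k := hD.trans_le (sub_le_self _ (sq_nonneg _))
  have hmse : Dpow g h σ q k / Apow g h σ q k ≤ mse g h σ q k u :=
    sub_norm_sq_div_le_quadratic hA (bCoef g q k) u
  have key := one_add_log_le_mul_sub_log (div_pos hD hA) hmse hρ
  rw [one_add_slinr_eq_Apow_div_Dpow g h q k hσ, log_div hA.ne' hD.ne']
  rw [log_div hD.ne' hA.ne'] at key
  linarith

end PseudoSE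

/-- In the instantaneous cluster-wise pseudo-SE setup, for every precoder tuple `q̄`,
every `u ∈ ℂ^S` and every `ρ ∈ (0,∞)^S`, the WMMSE objective satisfies
`J(ρ, u, q̄) ≥ ∑_k w_k (1 - log(1 + SLINR_k(q̄)))`. In particular, on any set `F` of
precoder tuples, the infimum of `J` over `F × ℂ^S × (0,∞)^S` is bounded below (in
extended reals) by `∑_k w_k - sup_{q̄∈F} ∑_k w_k log(1 + SLINR_k(q̄))`. -/
theorem wmmse_lower_bound (g : S → EuclideanSpace ℂ (Fin n))
    (h : S' → EuclideanSpace ℂ (Fin n)) (σ : ℝ) (hσ : 0 < σ)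
    (w : S → ℝ) (hw : ∀ k, 0 < w k) :
    (∀ q : S → EuclideanSpace ℂ (Fin n), ∀ u : S → ℂ, ∀ ρ : S → ℝ, (∀ k, 0 < ρ k) →
      (∑ k, w k * (1 - Real.log (1 + slinr g h σ q k))) ≤ Jobj g h σ w ρ u q) ∧
    ∀ F : Set (S → EuclideanSpace ℂ (Fin n)),
      (((∑ k, w k) : ℝ) : EReal) -
          sSup ((fun q => (((∑ k, w k * Real.log (1 + slinr g h σ q k)) : ℝ) : EReal)) '' F) ≤
        sInf {x : EReal | ∃ q ∈ F, ∃ u : S → ℂ, ∃ ρ : S → ℝ,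
          (∀ k, 0 < ρ k) ∧ x = ((Jobj g h σ w ρ u q : ℝ) : EReal)} := by
  have pointwise : ∀ q : S → EuclideanSpace ℂ (Fin n), ∀ u : S → ℂ, ∀ ρ : S → ℝ,
      (∀ k, 0 < ρ k) →
      (∑ k, w k * (1 - log (1 + slinr g h σ q k))) ≤ Jobj g h σ w ρ u q :=
    fun q u ρ hρ => Finset.sum_le_sum fun k _ => mul_le_mul_of_nonneg_left
      (one_sub_log_one_add_slinr_le g h q k hσ (u k) (hρ k)) (hw k).le
  refine ⟨pointwise, fun F => EReal.coe_sub_sSup_image_le_sInf F _ _ _ ?_⟩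
  rintro _ ⟨q, hq, u, ρ, hρ, rfl⟩
  refine ⟨q, hq, EReal.coe_le_coe_iff.mpr ?_⟩
  simpa only [mul_sub, mul_one, Finset.sum_sub_distrib] using pointwise q u ρ hρ

end
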